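/- arXiv:1707.04014 — 2 statements merged into one kernel-verified Lean document; each statement's English description precedes it below -/
import Mathlib

section
/- Let Σ ⊂ ℝⁿ be a compact smooth embedded k-dimensional submanifold without boundary and let (p,q) : [0,∞) → Σ × Σ be a chord shortening flow relative to Σ defined for all t ≥ 0. Then ‖η^T‖²(t) = |η^T(p(t))|² + |η^T(q(t))|² → 0 as t → +∞. -/
open scoped RealInnerProductSpace ENNReal
open Set Filter

noncomputable section

/-- Euclidean `n`-space. -/
abbrev Euc (n : ℕ) := EuclideanSpace ℝ (Fin n)

/-- The orthogonal projection `π_K` onto a submodule `K`, as a map `Euc n → Euc n`. -/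
def projSM {n : ℕ} (K : Submodule ℝ (Euc n)) (v : Euc n) : Euc n :=
  (K.orthogonalProjectionOnto v : Euc n)

/-- `S` is a smooth embedded `k`-dimensional submanifold (without boundary) of `ℝⁿ`,
whose tangent space at each `x ∈ S` is the `k`-dimensional subspace `T x ⊆ ℝⁿ`:
every point of `S` has a neighbourhood in `S` which is the image of a smooth injective
parametrization, which is a homeomorphism onto its image, with injective differential whose
range is the assigned tangent space. -/
def IsSubmanifold (n k : ℕ) (S : Set (Euc n)) (T : Euc n → Submodule ℝ (Euc n)) : Prop :=
  ∀ x ∈ S, ∃ (f : Euc k → Euc n) (u : Set (Euc k)) (v : Set (Euc n)),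
    IsOpen u ∧ IsOpen v ∧ x ∈ v ∧ ContDiffOn ℝ (⊤ : ℕ∞) f u ∧ Set.InjOn f u ∧
    f '' u = S ∩ v ∧
    (∀ s ⊆ u, IsOpen s → ∃ w : Set (Euc n), IsOpen w ∧ f '' s = S ∩ w) ∧
    ∀ y ∈ u, Function.Injective (fderiv ℝ f y) ∧
      LinearMap.range ((fderiv ℝ f y) : Euc k →ₗ[ℝ] Euc n) = T (f y)

/-- The tangential part `η^T(x) = π_{T x}((x - y)/|x - y|)` of the outward unit conormal at `x`
of the chord from `x` to `y`. -/
def conormalT {n : ℕ} (T : Euc n → Submodule ℝ (Euc n)) (x y : Euc n) : Euc n :=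
  projSM (T x) (‖x - y‖⁻¹ • (x - y))

/-- A chord shortening flow relative to `S` (with tangent spaces `T`) on the time domain `dom`:
a pair of C¹ curves `p q : dom → S` with `p t ≠ q t`, satisfying
`p' = -π_{p}((p-q)/|p-q|)` and `q' = -π_{q}((q-p)/|q-p|)`. -/
def IsCSFOn {n : ℕ} (S : Set (Euc n)) (T : Euc n → Submodule ℝ (Euc n))
    (dom : Set ℝ) (p q : ℝ → Euc n) : Prop :=
  ∀ t ∈ dom, p t ∈ S ∧ q t ∈ S ∧ p t ≠ q t ∧
    HasDerivWithinAt p (-(conormalT T (p t) (q t))) dom t ∧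
    HasDerivWithinAt q (-(conormalT T (q t) (p t))) dom t

/-- The time interval `[0, Tm)` (where possibly `Tm = ∞`). -/
def csfDomain (Tm : ℝ≥0∞) : Set ℝ := {t : ℝ | 0 ≤ t ∧ ENNReal.ofReal t < Tm}

/-- A maximal chord shortening flow: one defined on `[0, Tm)` which cannot be extended to a
chord shortening flow on a strictly larger interval `[0, Tm')`. -/
def IsMaximalCSF {n : ℕ} (S : Set (Euc n)) (T : Euc n → Submodule ℝ (Euc n))
    (Tm : ℝ≥0∞) (p q : ℝ → Euc n) : Prop :=
  IsCSFOn S T (csfDomain Tm) p q ∧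
  ∀ Tm' : ℝ≥0∞, Tm < Tm' → ∀ p' q' : ℝ → Euc n,
    IsCSFOn S T (csfDomain Tm') p' q' →
    ¬ (∀ t ∈ csfDomain Tm, p' t = p t ∧ q' t = q t)

/-!
The chord length `ℓ = |p - q|` satisfies `ℓ' = -‖η^T‖²`, so `ℓ` decreases and
`∫₀^∞ ‖η^T‖² ≤ ℓ(0)`. By compactness of `Σ` there is a `δ > 0` such that every chord of `Σ` of
length `< δ` is almost tangent to `Σ` at its endpoints, with `|η^T| ≥ 1/2`; a chord shorter than
`δ` would therefore shrink at rate `≥ 1/4` and vanish in finite time, so `ℓ ≥ δ` throughout.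
On the compact set of pairs of points of `Σ` at distance `≥ δ`, `‖η^T‖²` is a uniformly continuous
function of the endpoints, and the endpoints move with speed `≤ 1`; hence `t ↦ ‖η^T‖²(t)` is
uniformly continuous, and Barbalat's lemma gives `‖η^T‖² → 0`.
-/

open Topology

namespace Submodule

variable {E : Type*} [NormedAddCommGroup E] [InnerProductSpace ℝ E]
  (K : Submodule ℝ E) [K.HasOrthogonalProjection]

lemma inner_starProjection_self (v : E) : ⟪K.starProjection v, v⟫ = ‖K.starProjection v‖ ^ 2 := by
  simpa using K.re_inner_starProjection_eq_normSq v

lemma norm_le_two_mul_norm_starProjection {v w : E} (hw : w ∈ K) (h : 2 * ‖v - w‖ ≤ ‖v‖) :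
    ‖v‖ ≤ 2 * ‖K.starProjection v‖ := by
  have hmin : ‖v - K.starProjection v‖ ≤ ‖v - w‖ := by
    rw [K.starProjection_minimal v]
    exact ciInf_le ⟨0, by rintro r ⟨x, rfl⟩; positivity⟩ (⟨w, hw⟩ : K)
  have hpyth := K.norm_sq_eq_add_norm_sq_starProjection v
  rw [K.starProjection_orthogonal_val] at hpyth
  nlinarith [norm_nonneg (v - K.starProjection v), norm_nonneg (K.starProjection v),
    norm_nonneg (v - w)]

end Submodule

namespace ContinuousLinearMap

variable {E F : Type*} [NormedAddCommGroup E] [InnerProductSpace ℝ E] [FiniteDimensional ℝ E]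
  [NormedAddCommGroup F] [InnerProductSpace ℝ F] [CompleteSpace F]

/-- The orthogonal projection onto the range of an injective `A`, in a form that is visibly
continuous in `A`. -/
def rangeProjection (A : E →L[ℝ] F) : F →L[ℝ] F :=
  A ∘L Ring.inverse (adjoint A ∘L A) ∘L adjoint A

lemma isUnit_adjoint_comp_self {A : E →L[ℝ] F} (hA : Function.Injective A) :
    IsUnit (adjoint A ∘L A) := by
  rw [isUnit_iff_isUnit_toLinearMap, LinearMap.isUnit_iff_ker_eq_bot]
  exact (ker_adjoint_comp_self A).trans (LinearMap.ker_eq_bot.2 hA)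

lemma rangeProjection_eq_starProjection {A : E →L[ℝ] F} (hA : Function.Injective A)
    {K : Submodule ℝ F} [K.HasOrthogonalProjection] (hK : LinearMap.range (A : E →ₗ[ℝ] F) = K) :
    rangeProjection A = K.starProjection := by
  subst hK
  ext v
  symm
  refine Submodule.eq_starProjection_of_mem_orthogonal (LinearMap.mem_range_self _ _) ?_
  rw [Submodule.mem_orthogonal]
  rintro _ ⟨z, rfl⟩
  have hAP : adjoint A (rangeProjection A v) = adjoint A v := by
    change ((adjoint A ∘L A) * Ring.inverse (adjoint A ∘L A)) (adjoint A v) = adjoint A v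
    rw [Ring.mul_inverse_cancel _ (isUnit_adjoint_comp_self hA)]
    rfl
  rw [real_inner_comm, coe_coe, ← adjoint_inner_left, map_sub, hAP, sub_self, inner_zero_left]

lemma continuousAt_rangeProjection {A : E →L[ℝ] F} (hA : Function.Injective A) :
    ContinuousAt rangeProjection A := by
  have hadj : Continuous fun B : E →L[ℝ] F => adjoint B := adjoint.continuous
  have hinv := NormedRing.inverse_continuousAt (isUnit_adjoint_comp_self hA).unit
  rw [IsUnit.unit_spec] at hinv
  exact continuousAt_id.clm_comp
    ((hinv.comp (f := fun B => adjoint B ∘L B)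
      (hadj.clm_comp continuous_id).continuousAt).clm_comp hadj.continuousAt)

end ContinuousLinearMap

section ChordEstimate

variable {E F : Type*} [NormedAddCommGroup E] [NormedSpace ℝ E] [FiniteDimensional ℝ E]
  [NormedAddCommGroup F] [NormedSpace ℝ F]

lemma ContDiffAt.exists_mem_nhds_two_mul_norm_sub_fderiv_le {f : E → F} {a : E}
    (hf : ContDiffAt ℝ 1 f a) (hinj : Function.Injective (fderiv ℝ f a)) :
    ∃ s ∈ 𝓝 a, ∀ b ∈ s, ∀ c ∈ s, 2 * ‖f b - f c - fderiv ℝ f b (b - c)‖ ≤ ‖f b - f c‖ := by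
  obtain ⟨f', u, hu, hf'u, hderiv⟩ := contDiffAt_one_iff.1 hf
  have hfa : fderiv ℝ f a = f' a := (hderiv a (mem_of_mem_nhds hu)).fderiv
  obtain ⟨K, hK, hanti⟩ := LinearMap.exists_antilipschitzWith (f' a : E →ₗ[ℝ] F)
    (LinearMap.ker_eq_bot.2 (hfa ▸ hinj))
  set c₀ : ℝ := (K : ℝ)⁻¹
  have hc₀ : 0 < c₀ := by positivity
  have hlow : ∀ w, c₀ * ‖w‖ ≤ ‖f' a w‖ := fun w => by
    have := hanti.le_mul_dist w 0
    simp only [map_zero, dist_zero_right] at this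
    rwa [inv_mul_le_iff₀ (by positivity)]
  -- with `ε = c₀ / 7` the error `2 ε ‖b - c‖` is at most half of `(c₀ - 3 ε) ‖b - c‖ ≤ ‖f b - f c‖`
  set ε := c₀ / 7 with hε
  have hnear : ∀ᶠ ξ in 𝓝 a, ξ ∈ u ∧ ‖f' ξ - f' a‖ < ε :=
    Filter.Eventually.and hu <|
      (tendsto_iff_norm_sub_tendsto_zero.1 (hf'u.continuousAt hu)).eventually_lt_const
        (by positivity)
  obtain ⟨r, hr, hball⟩ := Metric.eventually_nhds_iff_ball.1 hnear
  refine ⟨Metric.ball a r, Metric.ball_mem_nhds a hr, fun b hb c hc => ?_⟩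
  rw [(hderiv b (hball b hb).1).fderiv]
  have hclose : ∀ ξ ∈ Metric.ball a r, ‖f' ξ - f' b‖ ≤ 2 * ε := fun ξ hξ => by
    have h₁ := (hball ξ hξ).2
    have h₂ := (hball b hb).2
    rw [norm_sub_rev] at h₂
    calc ‖f' ξ - f' b‖ = ‖(f' ξ - f' a) + (f' a - f' b)‖ := by rw [sub_add_sub_cancel]
      _ ≤ 2 * ε := by linarith [norm_add_le (f' ξ - f' a) (f' a - f' b)]
  have hmvt : ‖f b - f c - f' b (b - c)‖ ≤ 2 * ε * ‖b - c‖ :=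
    (convex_ball a r).norm_image_sub_le_of_norm_hasFDerivWithin_le'
      (fun ξ hξ => (hderiv ξ (hball ξ hξ).1).hasFDerivWithinAt) hclose hc hb
  have htan : (c₀ - ε) * ‖b - c‖ ≤ ‖f' b (b - c)‖ := by
    have h₁ : ‖(f' a - f' b) (b - c)‖ ≤ ε * ‖b - c‖ := by
      refine ((f' a - f' b).le_opNorm _).trans ?_
      gcongr
      rw [norm_sub_rev]
      exact (hball b hb).2.le
    have h₂ := norm_sub_norm_le (f' a (b - c)) (f' b (b - c))
    rw [← _root_.sub_apply] at h₂
    nlinarith [hlow (b - c)]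
  have hchord := norm_sub_norm_le (f' b (b - c)) (f b - f c)
  rw [norm_sub_rev (f' b (b - c))] at hchord
  rw [show c₀ = 7 * ε by rw [hε]; ring] at htan
  linarith

end ChordEstimate

lemma IsCompact.exists_pos_forall_dist_lt_of_mem_nhdsWithin {α : Type*} [PseudoMetricSpace α]
    {s : Set α} (hs : IsCompact s) {P : α → α → Prop}
    (h : ∀ x ∈ s, ∃ U ∈ 𝓝[s] x, ∀ y ∈ U, ∀ z ∈ U, P y z) :
    ∃ δ > 0, ∀ y ∈ s, ∀ z ∈ s, dist y z < δ → P y z := by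
  choose U hU hP using h
  obtain ⟨V, hV, hcover⟩ := lebesgue_number_lemma_nhdsWithin' hs hU
  obtain ⟨δ, hδ, hδV⟩ := Metric.mem_uniformity_dist.1 hV
  refine ⟨δ, hδ, fun y hy z hz hyz => ?_⟩
  obtain ⟨⟨x, hx⟩, hsub⟩ := hcover y hy
  exact hP x hx y (hsub ⟨hδV (by simpa using hδ), hy⟩) z (hsub ⟨hδV hyz, hz⟩)

lemma le_sub_mul_of_hasDerivWithinAt_neg {f g : ℝ → ℝ} {a b c : ℝ} (hab : a ≤ b)
    (hf : ∀ t ∈ Icc a b, HasDerivWithinAt f (-g t) (Icc a b) t)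
    (hc : ∀ t ∈ Icc a b, c ≤ g t) :
    f b ≤ f a - c * (b - a) := by
  have hanti : AntitoneOn (fun t => f t + c * t) (Icc a b) := by
    have hderiv : ∀ t ∈ Icc a b, HasDerivWithinAt (fun t => f t + c * t) (-g t + c) (Icc a b) t :=
      fun t ht => (hf t ht).add (by simpa using ((hasDerivAt_id t).const_mul c).hasDerivWithinAt)
    exact antitoneOn_of_hasDerivWithinAt_nonpos (convex_Icc a b)
      (fun t ht => (hderiv t ht).continuousWithinAt)
      (fun t ht => (hderiv t (interior_subset ht)).mono interior_subset)
      (fun t ht => by linarith [hc t (interior_subset ht)])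
  have := hanti (left_mem_Icc.2 hab) (right_mem_Icc.2 hab) hab
  simp only at this
  linarith

/-- Barbalat's lemma. -/
theorem tendsto_atTop_zero_of_hasDerivWithinAt_neg {f g : ℝ → ℝ} {m : ℝ}
    (hf : ∀ t ∈ Ici 0, HasDerivWithinAt f (-g t) (Ici 0) t) (hm : ∀ t ∈ Ici 0, m ≤ f t)
    (hg : ∀ t ∈ Ici 0, 0 ≤ g t) (huc : UniformContinuousOn g (Ici 0)) :
    Tendsto g atTop (𝓝 0) := by
  have hdrop : ∀ a b c, 0 ≤ a → a ≤ b → (∀ t ∈ Icc a b, c ≤ g t) → f b ≤ f a - c * (b - a) :=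
    fun a b c ha hab hc => le_sub_mul_of_hasDerivWithinAt_neg hab
      (fun t ht => (hf t (ha.trans ht.1)).mono fun s hs => ha.trans hs.1) hc
  set F := fun t => f (max t 0)
  have hanti : Antitone F := fun s t hst => by
    have := hdrop (max s 0) (max t 0) 0 (le_max_right _ _) (max_le_max_right 0 hst)
      fun u hu => hg u ((le_max_right _ _).trans hu.1)
    simpa using this
  have hF := tendsto_atTop_ciInf hanti ⟨m, by rintro _ ⟨t, rfl⟩; exact hm _ (le_max_right t 0)⟩
  rw [Metric.uniformContinuousOn_iff_le] at huc
  refine tendsto_order.2 ⟨fun ε hε => (eventually_ge_atTop 0).mono fun t ht =>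
    hε.trans_le (hg t ht), fun ε hε => ?_⟩
  obtain ⟨τ, hτ, hτg⟩ := huc (ε / 2) (half_pos hε)
  have hcauchy : Tendsto (fun t => F t - F (t + τ)) atTop (𝓝 0) := by
    simpa using hF.sub (hF.comp (tendsto_atTop_add_const_right _ τ tendsto_id))
  filter_upwards [eventually_ge_atTop 0, hcauchy.eventually (gt_mem_nhds (by positivity :
    0 < ε / 2 * τ))] with t ht hsmall
  by_contra! hge
  have hlarge : ∀ s ∈ Icc t (t + τ), ε / 2 ≤ g s := fun s hs => by
    have := hτg s (ht.trans hs.1) t ht (by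
      rw [Real.dist_eq, abs_of_nonneg (by linarith [hs.1])]; linarith [hs.2])
    rw [Real.dist_eq, abs_le] at this
    linarith
  have := hdrop t (t + τ) (ε / 2) ht (by linarith) hlarge
  simp only [F, max_eq_left ht, max_eq_left (by linarith : 0 ≤ t + τ)] at hsmall
  linarith

namespace IsSubmanifold

variable {n k : ℕ} {S : Set (Euc n)} {T : Euc n → Submodule ℝ (Euc n)}

lemma exists_chart (hS : IsSubmanifold n k S T) {x : Euc n} (hx : x ∈ S) :
    ∃ (f : Euc k → Euc n) (a : Euc k), f a = x ∧ ContDiffAt ℝ 1 f a ∧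
      (∀ᶠ b in 𝓝 a, Function.Injective (fderiv ℝ f b) ∧
        LinearMap.range (fderiv ℝ f b : Euc k →ₗ[ℝ] Euc n) = T (f b)) ∧
      𝓝[S] x ≤ Filter.map f (𝓝 a) := by
  obtain ⟨f, u, v, hu, -, hxv, hf, -, himg, hopen, htang⟩ := hS x hx
  obtain ⟨a, ha, rfl⟩ : x ∈ f '' u := himg ▸ ⟨hx, hxv⟩
  refine ⟨f, a, rfl, (hf.contDiffAt (hu.mem_nhds ha)).of_le (by exact_mod_cast le_top),
    Filter.eventually_of_mem (hu.mem_nhds ha) htang, fun s hs => ?_⟩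
  obtain ⟨t, hts, ht, hat⟩ := mem_nhds_iff.1 (Filter.inter_mem (hu.mem_nhds ha) hs)
  obtain ⟨w, hw, hfw⟩ := hopen t (hts.trans inter_subset_left) ht
  have hxw : f a ∈ w := (hfw ▸ mem_image_of_mem f hat).2
  refine Filter.mem_of_superset (inter_mem_nhdsWithin S (hw.mem_nhds hxw)) ?_
  rw [← hfw, image_subset_iff]
  exact hts.trans inter_subset_right

lemma continuousOn_starProjection (hS : IsSubmanifold n k S T) :
    ContinuousOn (fun x => (T x).starProjection) S := by
  intro x hx
  obtain ⟨f, a, rfl, hf, htang, hchart⟩ := hS.exists_chart hx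
  have hproj : ∀ᶠ b in 𝓝 a,
      (fderiv ℝ f b).rangeProjection = (T (f b)).starProjection := htang.mono fun b hb =>
    ContinuousLinearMap.rangeProjection_eq_starProjection hb.1 hb.2
  have hcont : ContinuousAt (fun b => (fderiv ℝ f b).rangeProjection) a :=
    (ContinuousLinearMap.continuousAt_rangeProjection htang.self_of_nhds.1).comp
      (hf.continuousAt_fderiv one_ne_zero)
  refine Filter.Tendsto.mono_left ?_ hchart
  exact tendsto_map'_iff.2 (hcont.congr hproj)

lemma exists_mem_nhdsWithin_norm_le_two_mul_norm_starProjection (hS : IsSubmanifold n k S T)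
    {x : Euc n} (hx : x ∈ S) :
    ∃ U ∈ 𝓝[S] x, ∀ y ∈ U, ∀ z ∈ U, ‖y - z‖ ≤ 2 * ‖(T y).starProjection (y - z)‖ := by
  obtain ⟨f, a, rfl, hf, htang, hchart⟩ := hS.exists_chart hx
  obtain ⟨s, hs, hchord⟩ := hf.exists_mem_nhds_two_mul_norm_sub_fderiv_le htang.self_of_nhds.1
  refine ⟨f '' (s ∩ {b | _}), hchart (image_mem_map (Filter.inter_mem hs htang)), ?_⟩
  rintro _ ⟨b, ⟨hbs, -, hbT⟩, rfl⟩ _ ⟨c, ⟨hcs, -⟩, rfl⟩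
  exact (T (f b)).norm_le_two_mul_norm_starProjection (hbT ▸ LinearMap.mem_range_self _ _)
    (hchord b hbs c hcs)

lemma exists_pos_forall_norm_le_two_mul_norm_starProjection (hS : IsSubmanifold n k S T)
    (hcpt : IsCompact S) :
    ∃ δ > 0, ∀ y ∈ S, ∀ z ∈ S, ‖y - z‖ < δ → ‖y - z‖ ≤ 2 * ‖(T y).starProjection (y - z)‖ := by
  simpa only [dist_eq_norm] using hcpt.exists_pos_forall_dist_lt_of_mem_nhdsWithin
    fun x hx => hS.exists_mem_nhdsWithin_norm_le_two_mul_norm_starProjection hx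

end IsSubmanifold

section Conormal

variable {n k : ℕ} {S : Set (Euc n)} {T : Euc n → Submodule ℝ (Euc n)}

lemma conormalT_eq (T : Euc n → Submodule ℝ (Euc n)) (x y : Euc n) :
    conormalT T x y = ‖x - y‖⁻¹ • (T x).starProjection (x - y) := by
  rw [conormalT, projSM, ← Submodule.starProjection_apply, map_smul]

lemma norm_conormalT_le_one (T : Euc n → Submodule ℝ (Euc n)) (x y : Euc n) :
    ‖conormalT T x y‖ ≤ 1 := by
  rw [conormalT_eq, norm_smul, norm_inv, norm_norm]
  rcases eq_or_ne x y with rfl | hxy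
  · simp
  · rw [inv_mul_le_one₀ (norm_pos_iff.2 (sub_ne_zero.2 hxy))]
    exact (T x).norm_starProjection_apply_le _

lemma IsSubmanifold.continuousOn_conormalT (hS : IsSubmanifold n k S T) :
    ContinuousOn (fun z : Euc n × Euc n => conormalT T z.1 z.2) {z | z.1 ∈ S ∧ z.1 ≠ z.2} := by
  simp only [conormalT_eq]
  have hsub : ContinuousOn (fun z : Euc n × Euc n => z.1 - z.2) {z | z.1 ∈ S ∧ z.1 ≠ z.2} :=
    (continuous_fst.sub continuous_snd).continuousOn
  exact (hsub.norm.inv₀ fun z hz => norm_ne_zero_iff.2 (sub_ne_zero.2 hz.2)).smul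
    ((hS.continuousOn_starProjection.comp continuousOn_fst fun z hz => hz.1).clm_apply hsub)

/-- `‖η^T‖²` for the chord between `x` and `y`. -/
def normSqConormalT (T : Euc n → Submodule ℝ (Euc n)) (x y : Euc n) : ℝ :=
  ‖conormalT T x y‖ ^ 2 + ‖conormalT T y x‖ ^ 2

lemma normSqConormalT_nonneg (T : Euc n → Submodule ℝ (Euc n)) (x y : Euc n) :
    0 ≤ normSqConormalT T x y := by
  unfold normSqConormalT
  positivity

lemma IsSubmanifold.continuousOn_normSqConormalT (hS : IsSubmanifold n k S T) :
    ContinuousOn (fun z : Euc n × Euc n => normSqConormalT T z.1 z.2)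
      {z | z.1 ∈ S ∧ z.2 ∈ S ∧ z.1 ≠ z.2} := by
  have h₁ := hS.continuousOn_conormalT.mono fun z (hz : z.1 ∈ S ∧ z.2 ∈ S ∧ z.1 ≠ z.2) =>
    ⟨hz.1, hz.2.2⟩
  have h₂ := hS.continuousOn_conormalT.comp continuous_swap.continuousOn
    fun z (hz : z.1 ∈ S ∧ z.2 ∈ S ∧ z.1 ≠ z.2) => ⟨hz.2.1, hz.2.2.symm⟩
  exact (h₁.norm.pow 2).add (h₂.norm.pow 2)

end Conormal

namespace IsCSFOn

variable {n k : ℕ} {S : Set (Euc n)} {T : Euc n → Submodule ℝ (Euc n)} {D : Set ℝ}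
  {p q : ℝ → Euc n}

lemma symm (h : IsCSFOn S T D p q) : IsCSFOn S T D q p := fun t ht =>
  let ⟨hp, hq, hne, hp', hq'⟩ := h t ht
  ⟨hq, hp, hne.symm, hq', hp'⟩

lemma lipschitzOnWith (h : IsCSFOn S T D p q) (hD : Convex ℝ D) : LipschitzOnWith 1 p D :=
  hD.lipschitzOnWith_of_nnnorm_hasDerivWithin_le (fun t ht => (h t ht).2.2.2.1) fun t _ => by
    rw [nnnorm_neg, ← NNReal.coe_le_coe, coe_nnnorm, NNReal.coe_one]
    exact norm_conormalT_le_one T _ _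

lemma hasDerivWithinAt_norm_sub (h : IsCSFOn S T D p q) {t : ℝ} (ht : t ∈ D) :
    HasDerivWithinAt (fun s => ‖p s - q s‖) (-normSqConormalT T (p t) (q t)) D t := by
  obtain ⟨-, -, hne, hp, hq⟩ := h t ht
  have hℓ : 0 < ‖p t - q t‖ := norm_pos_iff.2 (sub_ne_zero.2 hne)
  have hr : HasDerivWithinAt (fun s => p s - q s) _ D t := hp.sub hq
  have := hr.norm_sq.sqrt (by positivity)
  simp only [Real.sqrt_sq (norm_nonneg _)] at this
  convert this using 1
  rw [normSqConormalT, conormalT_eq, conormalT_eq, norm_sub_rev (q t), ← neg_sub (p t) (q t),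
    map_neg, neg_sub_neg, inner_sub_right, real_inner_smul_right, real_inner_smul_right,
    inner_neg_right, real_inner_comm, Submodule.inner_starProjection_self, real_inner_comm,
    Submodule.inner_starProjection_self, norm_smul, norm_smul, norm_neg, norm_inv, norm_norm]
  field_simp
  ring

lemma norm_sub_le_sub_mul (h : IsCSFOn S T D p q) {a b c : ℝ} (hab : a ≤ b) (hD : Icc a b ⊆ D)
    (hc : ∀ t ∈ Icc a b, c ≤ normSqConormalT T (p t) (q t)) :
    ‖p b - q b‖ ≤ ‖p a - q a‖ - c * (b - a) :=
  le_sub_mul_of_hasDerivWithinAt_neg hab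
    (fun _ ht => (h.hasDerivWithinAt_norm_sub (hD ht)).mono hD) hc

lemma le_norm_sub (h : IsCSFOn S T (Ici 0) p q) {δ : ℝ}
    (hchord : ∀ y ∈ S, ∀ z ∈ S, ‖y - z‖ < δ → ‖y - z‖ ≤ 2 * ‖(T y).starProjection (y - z)‖)
    {t₀ : ℝ} (ht₀ : t₀ ∈ Ici 0) :
    δ ≤ ‖p t₀ - q t₀‖ := by
  by_contra! hlt
  set ℓ₀ := ‖p t₀ - q t₀‖
  have hpos : ∀ t ∈ Ici (0 : ℝ), 0 < ‖p t - q t‖ := fun t ht =>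
    norm_pos_iff.2 (sub_ne_zero.2 (h t ht).2.2.1)
  have hIcc : ∀ {b}, Icc t₀ b ⊆ Ici 0 := fun hs => mem_Ici.2 (le_trans ht₀ hs.1)
  have hquarter : ∀ t ∈ Icc t₀ (t₀ + 4 * ℓ₀), 1 / 4 ≤ normSqConormalT T (p t) (q t) := by
    intro t ht
    obtain ⟨hpS, hqS, -, -, -⟩ := h t (hIcc ht)
    have hshort : ‖p t - q t‖ ≤ ℓ₀ := by
      simpa using h.norm_sub_le_sub_mul ht.1 hIcc fun s _ => normSqConormalT_nonneg T (p s) (q s)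
    have hhalf : 1 / 2 ≤ ‖conormalT T (p t) (q t)‖ := by
      rw [conormalT_eq, norm_smul, norm_inv, norm_norm, le_inv_mul_iff₀ (hpos t (hIcc ht))]
      linarith [hchord _ hpS _ hqS (by linarith)]
    unfold normSqConormalT
    nlinarith [sq_nonneg ‖conormalT T (q t) (p t)‖]
  have hdrop := h.norm_sub_le_sub_mul (by linarith [hpos t₀ ht₀]) hIcc hquarter
  have := hpos (t₀ + 4 * ℓ₀) (hIcc (right_mem_Icc.2 (by linarith [hpos t₀ ht₀])))
  linarith

lemma uniformContinuousOn_normSqConormalT (h : IsCSFOn S T D p q) (hS : IsSubmanifold n k S T)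
    (hcpt : IsCompact S) (hD : Convex ℝ D) {δ : ℝ} (hδ : 0 < δ)
    (hℓ : ∀ t ∈ D, δ ≤ ‖p t - q t‖) :
    UniformContinuousOn (fun t => normSqConormalT T (p t) (q t)) D := by
  set K := S ×ˢ S ∩ {z : Euc n × Euc n | δ ≤ ‖z.1 - z.2‖}
  have hK : IsCompact K := (hcpt.prod hcpt).inter_right
    (isClosed_le continuous_const (continuous_fst.sub continuous_snd).norm)
  have hG : UniformContinuousOn (fun z : Euc n × Euc n => normSqConormalT T z.1 z.2) K :=
    hK.uniformContinuousOn_of_continuous <| hS.continuousOn_normSqConormalT.mono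
      fun z ⟨⟨h₁, h₂⟩, hz⟩ => ⟨h₁, h₂, fun heq => by
        rw [mem_ofPred_eq, heq, sub_self, norm_zero] at hz
        linarith⟩
  have hpq : UniformContinuousOn (fun t => (p t, q t)) D :=
    ((h.lipschitzOnWith hD).prodMk (h.symm.lipschitzOnWith hD)).uniformContinuousOn
  have hmaps : MapsTo (fun t => (p t, q t)) D K :=
    fun t ht => ⟨⟨(h t ht).1, (h t ht).2.1⟩, hℓ t ht⟩
  exact (hG.comp hpq hmaps :)

end IsCSFOn

/-- If a chord shortening flow relative to a compact smooth embedded submanifold exists for all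
time `t ≥ 0`, then `‖η^T‖² = |η^T(p)|² + |η^T(q)|² → 0` as `t → ∞`. -/
theorem chord_statement_9 (n k : ℕ) (S : Set (Euc n)) (T : Euc n → Submodule ℝ (Euc n))
    (hsub : IsSubmanifold n k S T) (hcpt : IsCompact S)
    (p q : ℝ → Euc n) (hflow : IsCSFOn S T (Set.Ici 0) p q) :
    Tendsto (fun t => ‖conormalT T (p t) (q t)‖ ^ 2 + ‖conormalT T (q t) (p t)‖ ^ 2)
      atTop (nhds 0) := by
  obtain ⟨δ, hδ, hchord⟩ := hsub.exists_pos_forall_norm_le_two_mul_norm_starProjection hcpt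
  have hℓ : ∀ t ∈ Ici (0 : ℝ), δ ≤ ‖p t - q t‖ := fun _ ht => hflow.le_norm_sub hchord ht
  exact tendsto_atTop_zero_of_hasDerivWithinAt_neg (m := 0)
    (fun _ ht => hflow.hasDerivWithinAt_norm_sub ht) (fun _ _ => norm_nonneg _)
    (fun _ _ => normSqConormalT_nonneg T _ _)
    (hflow.uniformContinuousOn_normSqConormalT hsub hcpt (convex_Ici 0) hδ hℓ)

end
end

section
/- Let Ω ⊂ ℝ² be a compact connected region with smooth boundary ∂Ω, and let (p,q) : [0,T) → ∂Ω × ∂Ω be a chord shortening flow relative to ∂Ω. Then the boundary angle evolves by d/dt Θ(p) = −(Θ(p) − Θ(q))/ℓ + (1/ℓ)(‖Θ‖² + ℓ·k(p)·⟨−η(p), ν(p)⟩)·Θ(p) + (1/ℓ)(1 + ⟨ξ(p), ξ(q)⟩)(Θ(p) − Θ̄), where ℓ = ℓ(t) = |p(t) − q(t)|, and the symmetric equation (with p and q interchanged) holds for d/dt Θ(q). -/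
open scoped RealInnerProductSpace ENNReal
open Set Filter

noncomputable section

/-- Counterclockwise rotation by `π/2` in the plane. -/
def Jrot (v : Euc 2) : Euc 2 := !₂[-(v 1), v 0]

/-- The boundary angle `Θ(p) = ⟨η(p), ξ(p)⟩` at the first endpoint of the oriented chord
from `p` to `q`, where `η(p) = (p-q)/|p-q|` and `ξ` is the orientation field. -/
def thetaP (ξ : Euc 2 → Euc 2) (p q : Euc 2) : ℝ := ⟪‖p - q‖⁻¹ • (p - q), ξ p⟫

/-- The boundary angle `Θ(q) = -⟨η(q), ξ(q)⟩` at the second endpoint of the oriented chord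
from `p` to `q`, where `η(q) = (q-p)/|q-p|` and `ξ` is the orientation field. -/
def thetaQ (ξ : Euc 2 → Euc 2) (p q : Euc 2) : ℝ := -⟪‖q - p‖⁻¹ • (q - p), ξ q⟫

/-! Since `∂Ω` is a curve, `T x = ℝ ξ(x)`, so the flow reads `p' = -Θ(p) ξ(p)`, `q' = Θ(q) ξ(q)`,
and differentiating `|ξ|² = 1` along `∂Ω` gives `D_ξ ξ = k Jξ`. Hence `ℓ' = -‖Θ‖²`, and the
product rule applied to `Θ(p) = ⟨p - q, ξ(p)⟩ / ℓ` gives the equation at `p`. The equation at `q`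
is the one at `p` for the flow with its endpoints exchanged, since `Θ(q)` for the chord from `p`
to `q` is `-Θ(p)` for the chord from `q` to `p`. -/

theorem IsSubmanifold.subset_tangentConeAt {n k : ℕ} {S : Set (Euc n)}
    {T : Euc n → Submodule ℝ (Euc n)} (hS : IsSubmanifold n k S T) {x : Euc n} (hx : x ∈ S) :
    (T x : Set (Euc n)) ⊆ tangentConeAt ℝ S x := by
  obtain ⟨f, u, v, hu, -, hxv, hf, -, hfu, -, hdf⟩ := hS x hx
  obtain ⟨y, hy, rfl⟩ : x ∈ f '' u := hfu ▸ ⟨hx, hxv⟩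
  rw [← (hdf y hy).2]
  rintro _ ⟨e, rfl⟩
  have hfy : HasFDerivAt f (fderiv ℝ f y) y :=
    ((hf.contDiffAt (hu.mem_nhds hy)).differentiableAt (by simp)).hasFDerivAt
  have he : e ∈ tangentConeAt ℝ u y := by
    rw [tangentConeAt_of_mem_nhds (hu.mem_nhds hy)]; trivial
  exact tangentConeAt_mono (hfu ▸ inter_subset_left) (hfy.hasFDerivWithinAt.mapsTo_tangent_cone he)

theorem IsSubmanifold.eq_span_singleton {n : ℕ} {S : Set (Euc n)}
    {T : Euc n → Submodule ℝ (Euc n)} (hS : IsSubmanifold n 1 S T) {x : Euc n} (hx : x ∈ S)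
    {w : Euc n} (hw : w ∈ T x) (hw0 : w ≠ 0) : T x = ℝ ∙ w := by
  obtain ⟨f, u, v, -, -, hxv, -, -, hfu, -, hdf⟩ := hS x hx
  obtain ⟨y, hy, rfl⟩ : x ∈ f '' u := hfu ▸ ⟨hx, hxv⟩
  have hdim : Module.finrank ℝ (T (f y)) ≤ 1 := by
    rw [← (hdf y hy).2]
    exact (LinearMap.finrank_range_le _).trans finrank_euclideanSpace_fin.le
  refine (Submodule.eq_of_le_of_finrank_le ((Submodule.span_singleton_le_iff_mem _ _).2 hw) ?_).symm
  rwa [finrank_span_singleton hw0]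

theorem IsSubmanifold.projSM_eq_inner_smul {n : ℕ} {S : Set (Euc n)}
    {T : Euc n → Submodule ℝ (Euc n)} (hS : IsSubmanifold n 1 S T) {x : Euc n} (hx : x ∈ S)
    {w : Euc n} (hw : w ∈ T x) (hw1 : ‖w‖ = 1) (v : Euc n) :
    projSM (T x) v = ⟪w, v⟫ • w := by
  have hw0 : w ≠ 0 := by rintro rfl; simp at hw1
  rw [projSM, hS.eq_span_singleton hx hw hw0]
  exact Submodule.starProjection_unit_singleton ℝ hw1 v

theorem HasFDerivWithinAt.inner_apply_eq_zero_of_norm_eq_one {F E : Type*}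
    [NormedAddCommGroup F] [NormedSpace ℝ F] [NormedAddCommGroup E] [InnerProductSpace ℝ E]
    {S : Set F} {ξ : F → E} {ξ' : F →L[ℝ] E} {x : F} (hξ : HasFDerivWithinAt ξ ξ' S x)
    (h1 : ∀ y ∈ S, ‖ξ y‖ = 1) (hx : x ∈ S) {v : F} (hv : v ∈ tangentConeAt ℝ S x) :
    ⟪ξ x, ξ' v⟫ = 0 := by
  have hconst : HasFDerivWithinAt (‖ξ ·‖ ^ 2) (0 : F →L[ℝ] ℝ) S x :=
    (hasFDerivWithinAt_const 1 x S).congr (fun y hy => by simp [h1 y hy]) (by simp [h1 x hx])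
  simpa using hξ.norm_sq.unique_on hconst hv

theorem HasDerivWithinAt.norm {F : Type*} [NormedAddCommGroup F] [InnerProductSpace ℝ F]
    {f : ℝ → F} {f' : F} {s : Set ℝ} {t : ℝ} (hf : HasDerivWithinAt f f' s t) (h0 : f t ≠ 0) :
    HasDerivWithinAt (‖f ·‖) (⟪f t, f'⟫ / ‖f t‖) s t := by
  have hsq := hf.norm_sq.sqrt (by positivity)
  simp only [Real.sqrt_sq (norm_nonneg _)] at hsq
  convert hsq using 1
  field_simp

theorem eq_inner_jrot_smul_jrot {w v : Euc 2} (hw : ‖w‖ = 1) (hv : ⟪w, v⟫ = 0) :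
    v = ⟪v, Jrot w⟫ • Jrot w := by
  have hw' : w 0 ^ 2 + w 1 ^ 2 = 1 := by
    simpa [EuclideanSpace.norm_eq, Fin.sum_univ_two, Real.sqrt_eq_one] using hw
  simp only [PiLp.inner_apply, Fin.sum_univ_two, RCLike.inner_apply, conj_trivial] at hv
  ext i
  fin_cases i <;> simp [Jrot, PiLp.inner_apply, Fin.sum_univ_two]
  · linear_combination -(v 0) * hw' + w 0 * hv
  · linear_combination -(v 1) * hw' + w 1 * hv

theorem HasFDerivWithinAt.apply_self_eq_inner_jrot_smul {S : Set (Euc 2)}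
    {T : Euc 2 → Submodule ℝ (Euc 2)} (hS : IsSubmanifold 2 1 S T) {ξ : Euc 2 → Euc 2}
    (hξ : ∀ x ∈ S, ξ x ∈ T x ∧ ‖ξ x‖ = 1) {dξ : Euc 2 →L[ℝ] Euc 2} {x : Euc 2} (hx : x ∈ S)
    (hd : HasFDerivWithinAt ξ dξ S x) :
    dξ (ξ x) = ⟪dξ (ξ x), Jrot (ξ x)⟫ • Jrot (ξ x) :=
  eq_inner_jrot_smul_jrot (hξ x hx).2 <| hd.inner_apply_eq_zero_of_norm_eq_one
    (fun y hy => (hξ y hy).2) hx (hS.subset_tangentConeAt hx (hξ x hx).1)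

theorem thetaP_eq_inv_mul_inner (ξ : Euc 2 → Euc 2) (x y : Euc 2) :
    thetaP ξ x y = ‖x - y‖⁻¹ * ⟪x - y, ξ x⟫ :=
  real_inner_smul_left _ _ _

theorem thetaQ_eq_neg_thetaP (ξ : Euc 2 → Euc 2) (x y : Euc 2) :
    thetaQ ξ x y = -thetaP ξ y x :=
  rfl

theorem thetaQ_eq_inv_mul_inner (ξ : Euc 2 → Euc 2) (x y : Euc 2) :
    thetaQ ξ x y = ‖x - y‖⁻¹ * ⟪x - y, ξ y⟫ := by
  rw [thetaQ_eq_neg_thetaP, thetaP_eq_inv_mul_inner, norm_sub_rev, ← neg_sub x y,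
    inner_neg_left, mul_neg, neg_neg]

section ChordShorteningFlow

variable {S : Set (Euc 2)} {T : Euc 2 → Submodule ℝ (Euc 2)} {ξ : Euc 2 → Euc 2}
  {D : Set ℝ} {p q : ℝ → Euc 2} {t : ℝ}

theorem IsCSFOn.swap (h : IsCSFOn S T D p q) : IsCSFOn S T D q p := fun t ht =>
  let ⟨hp, hq, hpq, hp', hq'⟩ := h t ht
  ⟨hq, hp, hpq.symm, hq', hp'⟩

theorem IsCSFOn.hasDerivWithinAt_fst (hS : IsSubmanifold 2 1 S T)
    (hξ : ∀ x ∈ S, ξ x ∈ T x ∧ ‖ξ x‖ = 1) (hflow : IsCSFOn S T D p q) (ht : t ∈ D) :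
    HasDerivWithinAt p (-(thetaP ξ (p t) (q t) • ξ (p t))) D t := by
  obtain ⟨hp, -, -, hp', -⟩ := hflow t ht
  obtain ⟨hξp, hξp1⟩ := hξ _ hp
  rwa [conormalT, hS.projSM_eq_inner_smul hp hξp hξp1, real_inner_comm] at hp'

theorem IsCSFOn.hasDerivWithinAt_snd (hS : IsSubmanifold 2 1 S T)
    (hξ : ∀ x ∈ S, ξ x ∈ T x ∧ ‖ξ x‖ = 1) (hflow : IsCSFOn S T D p q) (ht : t ∈ D) :
    HasDerivWithinAt q (thetaQ ξ (p t) (q t) • ξ (q t)) D t := by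
  simpa only [thetaQ_eq_neg_thetaP, neg_smul] using hflow.swap.hasDerivWithinAt_fst hS hξ ht

theorem IsCSFOn.hasDerivWithinAt_norm_sub_s12 (hS : IsSubmanifold 2 1 S T)
    (hξ : ∀ x ∈ S, ξ x ∈ T x ∧ ‖ξ x‖ = 1) (hflow : IsCSFOn S T D p q) (ht : t ∈ D) :
    HasDerivWithinAt (fun s => ‖p s - q s‖)
      (-(thetaP ξ (p t) (q t) ^ 2 + thetaQ ξ (p t) (q t) ^ 2)) D t := by
  have hℓ : ‖p t - q t‖ ≠ 0 := norm_ne_zero_iff.2 (sub_ne_zero.2 (hflow t ht).2.2.1)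
  refine ((hflow.hasDerivWithinAt_fst hS hξ ht).sub
    (hflow.hasDerivWithinAt_snd hS hξ ht)).norm (by simpa using hℓ) |>.congr_deriv ?_
  simp only [Pi.sub_apply, thetaP_eq_inv_mul_inner, thetaQ_eq_inv_mul_inner, inner_sub_right,
    inner_neg_right, real_inner_smul_right]
  field_simp
  ring

theorem IsCSFOn.hasDerivWithinAt_comp_fst {κ : Euc 2 → ℝ} (hS : IsSubmanifold 2 1 S T)
    (hξ : ∀ x ∈ S, ξ x ∈ T x ∧ ‖ξ x‖ = 1)
    (hκ : ∀ x ∈ S, ∃ dξ : Euc 2 →L[ℝ] Euc 2,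
      HasFDerivWithinAt ξ dξ S x ∧ κ x = ⟪dξ (ξ x), Jrot (ξ x)⟫)
    (hflow : IsCSFOn S T D p q) (ht : t ∈ D) :
    HasDerivWithinAt (fun s => ξ (p s))
      ((-thetaP ξ (p t) (q t) * κ (p t)) • Jrot (ξ (p t))) D t := by
  have hp := (hflow t ht).1
  obtain ⟨dξ, hd, hκp⟩ := hκ _ hp
  refine (hd.comp_hasDerivWithinAt t (hflow.hasDerivWithinAt_fst hS hξ ht)
    (fun s hs => (hflow s hs).1)).congr_deriv ?_
  rw [map_neg, map_smul, hd.apply_self_eq_inner_jrot_smul hS hξ hp, ← hκp, smul_smul, neg_mul,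
    neg_smul]

theorem IsCSFOn.hasDerivWithinAt_thetaP {κ : Euc 2 → ℝ} (hS : IsSubmanifold 2 1 S T) (hξ : ∀ x ∈ S, ξ x ∈ T x ∧ ‖ξ x‖ = 1)
    (hκ : ∀ x ∈ S, ∃ dξ : Euc 2 →L[ℝ] Euc 2,
      HasFDerivWithinAt ξ dξ S x ∧ κ x = ⟪dξ (ξ x), Jrot (ξ x)⟫)
    (hflow : IsCSFOn S T D p q) (ht : t ∈ D) :
    HasDerivWithinAt (fun s => thetaP ξ (p s) (q s))
      (-(thetaP ξ (p t) (q t) - thetaQ ξ (p t) (q t)) / ‖p t - q t‖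
        + ‖p t - q t‖⁻¹ *
            ((thetaP ξ (p t) (q t) ^ 2 + thetaQ ξ (p t) (q t) ^ 2)
              + ‖p t - q t‖ * κ (p t) *
                ⟪-(‖p t - q t‖⁻¹ • (p t - q t)), Jrot (ξ (p t))⟫) *
            thetaP ξ (p t) (q t)
        + ‖p t - q t‖⁻¹ * (1 + ⟪ξ (p t), ξ (q t)⟫) *
            (thetaP ξ (p t) (q t) - (thetaP ξ (p t) (q t) + thetaQ ξ (p t) (q t))))
      D t := by
  have hℓ : ‖p t - q t‖ ≠ 0 := norm_ne_zero_iff.2 (sub_ne_zero.2 (hflow t ht).2.2.1)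
  have hξp : ⟪ξ (p t), ξ (p t)⟫ = 1 := by
    rw [real_inner_self_eq_norm_sq, (hξ _ (hflow t ht).1).2, one_pow]
  have hchord := (hflow.hasDerivWithinAt_fst hS hξ ht).sub (hflow.hasDerivWithinAt_snd hS hξ ht)
  have hθ := ((hflow.hasDerivWithinAt_norm_sub_s12 hS hξ ht).inv hℓ).mul
    (hchord.inner ℝ (hflow.hasDerivWithinAt_comp_fst hS hξ hκ ht))
  have hfun : (fun s => thetaP ξ (p s) (q s)) = fun s => ‖(p - q) s‖⁻¹ * ⟪(p - q) s, ξ (p s)⟫ :=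
    funext fun s => thetaP_eq_inv_mul_inner ξ _ _
  rw [hfun]
  refine hθ.congr_deriv ?_
  simp only [Pi.sub_apply, Pi.inv_apply, thetaP_eq_inv_mul_inner, thetaQ_eq_inv_mul_inner,
    inner_sub_left, inner_neg_left, real_inner_smul_left, real_inner_smul_right, hξp,
    real_inner_comm (ξ (p t)) (ξ (q t))]
  field_simp
  ring

end ChordShorteningFlow

theorem chord_statement_12_general
    (Ω : Set (Euc 2))
    (T : Euc 2 → Submodule ℝ (Euc 2)) (hsub : IsSubmanifold 2 1 (frontier Ω) T)
    (ξ : Euc 2 → Euc 2)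
    (hξ : ∀ x ∈ frontier Ω, ξ x ∈ T x ∧ ‖ξ x‖ = 1 ∧
      ∃ ε : ℝ, 0 < ε ∧ ∀ s : ℝ, 0 < s → s < ε → x + s • Jrot (ξ x) ∈ interior Ω)
    (κ : Euc 2 → ℝ)
    (hκ : ∀ x ∈ frontier Ω, ∃ dξ : Euc 2 →L[ℝ] Euc 2,
      HasFDerivWithinAt ξ dξ (frontier Ω) x ∧ κ x = ⟪dξ (ξ x), Jrot (ξ x)⟫)
    (Tm : ℝ≥0∞) (p q : ℝ → Euc 2)
    (hflow : IsCSFOn (frontier Ω) T (csfDomain Tm) p q) :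
    ∀ t ∈ csfDomain Tm,
      HasDerivWithinAt (fun s => thetaP ξ (p s) (q s))
        (-(thetaP ξ (p t) (q t) - thetaQ ξ (p t) (q t)) / ‖p t - q t‖
          + ‖p t - q t‖⁻¹ *
              ((thetaP ξ (p t) (q t) ^ 2 + thetaQ ξ (p t) (q t) ^ 2)
                + ‖p t - q t‖ * κ (p t) *
                  ⟪-(‖p t - q t‖⁻¹ • (p t - q t)), Jrot (ξ (p t))⟫) *
              thetaP ξ (p t) (q t)
          + ‖p t - q t‖⁻¹ * (1 + ⟪ξ (p t), ξ (q t)⟫) *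
              (thetaP ξ (p t) (q t) - (thetaP ξ (p t) (q t) + thetaQ ξ (p t) (q t))))
        (csfDomain Tm) t ∧
      HasDerivWithinAt (fun s => thetaQ ξ (p s) (q s))
        (-(thetaQ ξ (p t) (q t) - thetaP ξ (p t) (q t)) / ‖p t - q t‖
          + ‖p t - q t‖⁻¹ *
              ((thetaP ξ (p t) (q t) ^ 2 + thetaQ ξ (p t) (q t) ^ 2)
                + ‖p t - q t‖ * κ (q t) *
                  ⟪-(‖q t - p t‖⁻¹ • (q t - p t)), Jrot (ξ (q t))⟫) *
              thetaQ ξ (p t) (q t)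
          + ‖p t - q t‖⁻¹ * (1 + ⟪ξ (q t), ξ (p t)⟫) *
              (thetaQ ξ (p t) (q t) - (thetaP ξ (p t) (q t) + thetaQ ξ (p t) (q t))))
        (csfDomain Tm) t := by
  intro t ht
  have hξ' : ∀ x ∈ frontier Ω, ξ x ∈ T x ∧ ‖ξ x‖ = 1 := fun x hx => ⟨(hξ x hx).1, (hξ x hx).2.1⟩
  refine ⟨hflow.hasDerivWithinAt_thetaP hsub hξ' hκ ht,
    (hflow.swap.hasDerivWithinAt_thetaP hsub hξ' hκ ht).neg.congr_deriv ?_⟩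
  have hθq : thetaP ξ (q t) (p t) = -thetaQ ξ (p t) (q t) := by rw [thetaQ_eq_neg_thetaP, neg_neg]
  rw [hθq, thetaQ_eq_neg_thetaP ξ (q t), norm_sub_rev (q t)]
  ring

/-- **Evolution of the boundary angle** under the chord shortening flow relative to the smooth
boundary of a compact connected planar region:
`dΘ(p)/dt = -(Θ(p)-Θ(q))/ℓ + (1/ℓ)(‖Θ‖² + ℓ·k(p)·⟨-η(p),ν(p)⟩)Θ(p)
 + (1/ℓ)(1+⟨ξ(p),ξ(q)⟩)(Θ(p)-Θ̄)`, and symmetrically at `q`. -/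
theorem chord_statement_12
    (Ω : Set (Euc 2)) (hcpt : IsCompact Ω) (hconn : IsConnected Ω)
    (hreg : Ω = closure (interior Ω))
    (T : Euc 2 → Submodule ℝ (Euc 2)) (hsub : IsSubmanifold 2 1 (frontier Ω) T)
    (ξ : Euc 2 → Euc 2)
    (hξ : ∀ x ∈ frontier Ω, ξ x ∈ T x ∧ ‖ξ x‖ = 1 ∧
      ∃ ε : ℝ, 0 < ε ∧ ∀ s : ℝ, 0 < s → s < ε → x + s • Jrot (ξ x) ∈ interior Ω)
    (κ : Euc 2 → ℝ)
    (hκ : ∀ x ∈ frontier Ω, ∃ dξ : Euc 2 →L[ℝ] Euc 2,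
      HasFDerivWithinAt ξ dξ (frontier Ω) x ∧ κ x = ⟪dξ (ξ x), Jrot (ξ x)⟫)
    (Tm : ℝ≥0∞) (p q : ℝ → Euc 2)
    (hflow : IsCSFOn (frontier Ω) T (csfDomain Tm) p q) :
    ∀ t ∈ csfDomain Tm,
      HasDerivWithinAt (fun s => thetaP ξ (p s) (q s))
        (-(thetaP ξ (p t) (q t) - thetaQ ξ (p t) (q t)) / ‖p t - q t‖
          + ‖p t - q t‖⁻¹ *
              ((thetaP ξ (p t) (q t) ^ 2 + thetaQ ξ (p t) (q t) ^ 2)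
                + ‖p t - q t‖ * κ (p t) *
                  ⟪-(‖p t - q t‖⁻¹ • (p t - q t)), Jrot (ξ (p t))⟫) *
              thetaP ξ (p t) (q t)
          + ‖p t - q t‖⁻¹ * (1 + ⟪ξ (p t), ξ (q t)⟫) *
              (thetaP ξ (p t) (q t) - (thetaP ξ (p t) (q t) + thetaQ ξ (p t) (q t))))
        (csfDomain Tm) t ∧
      HasDerivWithinAt (fun s => thetaQ ξ (p s) (q s))
        (-(thetaQ ξ (p t) (q t) - thetaP ξ (p t) (q t)) / ‖p t - q t‖
          + ‖p t - q t‖⁻¹ *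
              ((thetaP ξ (p t) (q t) ^ 2 + thetaQ ξ (p t) (q t) ^ 2)
                + ‖p t - q t‖ * κ (q t) *
                  ⟪-(‖q t - p t‖⁻¹ • (q t - p t)), Jrot (ξ (q t))⟫) *
              thetaQ ξ (p t) (q t)
          + ‖p t - q t‖⁻¹ * (1 + ⟪ξ (q t), ξ (p t)⟫) *
              (thetaQ ξ (p t) (q t) - (thetaP ξ (p t) (q t) + thetaQ ξ (p t) (q t))))
        (csfDomain Tm) t :=
  chord_statement_12_general Ω T hsub ξ hξ κ hκ Tm p q hflow

end
end
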